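/- A 2-site (K,J) admits a bicategory of fractions for the class W_J of weak equivalences; that is, W_J satisfies Pronk's conditions BF1–BF4. -/

import Mathlib

open CategoryTheory Bicategory

universe w v u

variable {B : Type u} [Bicategory.{w, v} B]

/-- Postcomposition with a 1-morphism, as a functor between hom-categories. -/
@[simps] def Postcomp {a b : B} (q : a ⟶ b) (z : B) : (z ⟶ a) ⥤ (z ⟶ b) where
  obj h := h ≫ q
  map α := α ▷ q

/-- A 1-morphism is ff if all postcomposition functors are fully faithful. -/
def IsFF {a b : B} (q : a ⟶ b) : Prop :=
  ∀ z : B, (Postcomp q z).Full ∧ (Postcomp q z).Faithful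

/-- Internal equivalence in a bicategory. -/
def IsIntEquiv {a b : B} (f : a ⟶ b) : Prop :=
  ∃ g : b ⟶ a, Nonempty (f ≫ g ≅ 𝟙 a) ∧ Nonempty (g ≫ f ≅ 𝟙 b)

/-- A fully faithful singleton coverage on a 2-category; a 2-site. -/
structure TwoSite (B : Type u) [Bicategory.{w, v} B] where
  J : ∀ ⦃a b : B⦄, (a ⟶ b) → Prop
  id_mem : ∀ a : B, J (𝟙 a)
  comp_mem : ∀ ⦃a b c : B⦄ {f : a ⟶ b} {g : b ⟶ c}, J f → J g → J (f ≫ g)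
  square : ∀ ⦃u x y : B⦄ (q : u ⟶ x), J q → ∀ f : y ⟶ x,
    ∃ (v : B) (k : v ⟶ y) (h : v ⟶ u), J k ∧ Nonempty (h ≫ q ≅ k ≫ f)
  ff : ∀ ⦃a b : B⦄ {q : a ⟶ b}, J q → IsFF q

/-- A 1-arrow is J-locally split. -/
def LocallySplit (S : TwoSite B) {x y : B} (f : x ⟶ y) : Prop :=
  ∃ (u : B) (j : u ⟶ y), S.J j ∧ ∃ s : u ⟶ x, Nonempty (s ≫ f ≅ j)

/-- A weak equivalence: ff and J-locally split. -/
def WeakEquiv (S : TwoSite B) {x y : B} (f : x ⟶ y) : Prop :=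
  IsFF f ∧ LocallySplit S f

/-- Pronk's BF1: W contains all equivalences. -/
def BF1 (W : ∀ ⦃a b : B⦄, (a ⟶ b) → Prop) : Prop :=
  ∀ ⦃a b : B⦄ (f : a ⟶ b), IsIntEquiv f → W f

/-- Pronk's BF2: W is closed under composition and isomorphism. -/
def BF2 (W : ∀ ⦃a b : B⦄, (a ⟶ b) → Prop) : Prop :=
  (∀ ⦃a b c : B⦄ {f : a ⟶ b} {g : b ⟶ c}, W f → W g → W (f ≫ g)) ∧
  (∀ ⦃a b : B⦄ {f g : a ⟶ b}, W f → Nonempty (f ≅ g) → W g)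

/-- Pronk's BF3: cospans with one leg in W complete to 2-commuting squares. -/
def BF3 (W : ∀ ⦃a b : B⦄, (a ⟶ b) → Prop) : Prop :=
  ∀ ⦃a a' c : B⦄ (w : a' ⟶ a) (f : c ⟶ a), W w →
    ∃ (p : B) (v : p ⟶ c) (g : p ⟶ a'), W v ∧ Nonempty (g ≫ w ≅ v ≫ f)

/-- Pronk's BF4: 2-cells into arrows of W factor, essentially uniquely. -/
def BF4 (W : ∀ ⦃a b : B⦄, (a ⟶ b) → Prop) : Prop :=
  ∀ ⦃x y z : B⦄ (f g : x ⟶ y) (w : y ⟶ z), W w → ∀ α : f ≫ w ⟶ g ≫ w,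
    (∃ (x' : B) (v : x' ⟶ x) (β : v ≫ f ⟶ v ≫ g), W v ∧
       β ▷ w = (α_ v f w).hom ≫ v ◁ α ≫ (α_ v g w).inv ∧
       (IsIso α → IsIso β)) ∧
    (∀ (x' x'' : B) (v : x' ⟶ x) (v' : x'' ⟶ x)
       (β : v ≫ f ⟶ v ≫ g) (β' : v' ≫ f ⟶ v' ≫ g), W v → W v' →
       β ▷ w = (α_ v f w).hom ≫ v ◁ α ≫ (α_ v g w).inv →
       β' ▷ w = (α_ v' f w).hom ≫ v' ◁ α ≫ (α_ v' g w).inv →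
       ∃ (t : B) (u : t ⟶ x') (u' : t ⟶ x''),
         W (u ≫ v) ∧ W (u' ≫ v') ∧
         ∃ e : u ≫ v ≅ u' ≫ v',
           e.hom ▷ f ≫ (α_ u' v' f).hom ≫ u' ◁ β' =
             (α_ u v f).hom ≫ u ◁ β ≫ (α_ u v g).inv ≫
               e.hom ▷ g ≫ (α_ u' v' g).hom)

/-!
Postcomposition with `f ≫ g`, with an isomorphic arrow, or with an equivalence is, up to natural
isomorphism, a composite of fully faithful functors, a fully faithful functor, or an equivalence of
categories; so ff arrows contain the equivalences and are closed under composition and isomorphism.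
Local splitness is transported along the squares of the coverage, which also gives BF3 with the new
leg in `J ⊆ W`. For BF4, the ff arrow `w` turns `α` into `γ ▷ w` for a unique `γ : f ⟶ g`: so `α`
factors through the identity, and any two factorizations along `v`, `v'` are `v ◁ γ`, `v' ◁ γ`,
which agree over a BF3 square completing `v` and `v'`.
-/

section IsFF

theorem isFF_iff_postcomposing {a b : B} (q : a ⟶ b) :
    IsFF q ↔ ∀ z, ((postcomposing z a b).obj q).Full ∧ ((postcomposing z a b).obj q).Faithful :=
  Iff.rfl

theorem IsFF.comp {a b c : B} {f : a ⟶ b} {g : b ⟶ c} (hf : IsFF f) (hg : IsFF g) :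
    IsFF (f ≫ g) := by
  rw [isFF_iff_postcomposing] at *
  intro z
  have := (hf z).1; have := (hf z).2; have := (hg z).1; have := (hg z).2
  exact ⟨.of_iso (associatorNatIsoLeft z f g), .of_iso (associatorNatIsoLeft z f g)⟩

theorem IsFF.of_iso {a b : B} {f g : a ⟶ b} (hf : IsFF f) (e : f ≅ g) : IsFF g := by
  rw [isFF_iff_postcomposing] at *
  intro z
  have := (hf z).1; have := (hf z).2
  exact ⟨.of_iso ((postcomposing z a b).mapIso e), .of_iso ((postcomposing z a b).mapIso e)⟩

def postcompEquivalence {a b : B} {f : a ⟶ b} {g : b ⟶ a} (unit : f ≫ g ≅ 𝟙 a)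
    (counit : g ≫ f ≅ 𝟙 b) (z : B) : (z ⟶ a) ≌ (z ⟶ b) :=
  .mk ((postcomposing z a b).obj f) ((postcomposing z b a).obj g)
    (associatorNatIsoLeft z f g ≪≫ (postcomposing z a a).mapIso unit ≪≫ rightUnitorNatIso z a).symm
    (associatorNatIsoLeft z g f ≪≫ (postcomposing z b b).mapIso counit ≪≫ rightUnitorNatIso z b)

theorem IsIntEquiv.isFF {a b : B} {f : a ⟶ b} (hf : IsIntEquiv f) : IsFF f := by
  obtain ⟨g, ⟨unit⟩, ⟨counit⟩⟩ := hf
  exact fun z => ⟨(postcompEquivalence unit counit z).full_functor,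
    (postcompEquivalence unit counit z).faithful_functor⟩

theorem isIntEquiv_id (a : B) : IsIntEquiv (𝟙 a) :=
  ⟨𝟙 a, ⟨λ_ (𝟙 a)⟩, ⟨λ_ (𝟙 a)⟩⟩

theorem IsFF.exists_whiskerRight_eq {x y z : B} {f g : x ⟶ y} {w : y ⟶ z} (hw : IsFF w)
    (α : f ≫ w ⟶ g ≫ w) : ∃ γ : f ⟶ g, γ ▷ w = α :=
  have := (hw x).1
  (Postcomp w x).map_surjective α

theorem IsFF.whiskerRight_injective {x y z : B} {f g : x ⟶ y} {w : y ⟶ z} (hw : IsFF w) :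
    Function.Injective (fun γ : f ⟶ g => γ ▷ w) :=
  have := (hw x).2
  (Postcomp w x).map_injective

theorem IsFF.isIso_of_isIso_whiskerRight {x y z : B} {f g : x ⟶ y} {w : y ⟶ z} (hw : IsFF w)
    (γ : f ⟶ g) [IsIso (γ ▷ w)] : IsIso γ :=
  have := (hw x).1
  have := (hw x).2
  have : IsIso ((Postcomp w x).map γ) := ‹IsIso (γ ▷ w)›
  isIso_of_fully_faithful (Postcomp w x) γ

end IsFF

section WeakEquiv

variable (S : TwoSite B)

theorem TwoSite.locallySplit_of_J {a b : B} {j : a ⟶ b} (hj : S.J j) : LocallySplit S j :=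
  ⟨a, j, hj, 𝟙 a, ⟨λ_ j⟩⟩

theorem TwoSite.weakEquiv_of_J {a b : B} {j : a ⟶ b} (hj : S.J j) : WeakEquiv S j :=
  ⟨S.ff hj, S.locallySplit_of_J hj⟩

variable {S}

theorem LocallySplit.of_isIntEquiv {a b : B} {f : a ⟶ b} (hf : IsIntEquiv f) :
    LocallySplit S f :=
  let ⟨g, _, counit⟩ := hf
  ⟨b, 𝟙 b, S.id_mem b, g, counit⟩

theorem LocallySplit.of_iso {a b : B} {f g : a ⟶ b} (hf : LocallySplit S f) (e : f ≅ g) :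
    LocallySplit S g :=
  let ⟨u, j, hj, s, ⟨e'⟩⟩ := hf
  ⟨u, j, hj, s, ⟨whiskerLeftIso s e.symm ≪≫ e'⟩⟩

theorem LocallySplit.exists_square {a a' c : B} {w : a' ⟶ a} (hw : LocallySplit S w) (f : c ⟶ a) :
    ∃ (p : B) (v : p ⟶ c) (g : p ⟶ a'), S.J v ∧ Nonempty (g ≫ w ≅ v ≫ f) := by
  obtain ⟨u, j, hj, s, ⟨e⟩⟩ := hw
  obtain ⟨p, k, h, hk, ⟨e'⟩⟩ := S.square j hj f
  exact ⟨p, k, h ≫ s, hk, ⟨α_ h s w ≪≫ whiskerLeftIso h e ≪≫ e'⟩⟩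

theorem LocallySplit.comp {x y z : B} {f : x ⟶ y} {g : y ⟶ z} (hf : LocallySplit S f)
    (hg : LocallySplit S g) : LocallySplit S (f ≫ g) := by
  obtain ⟨u, j, hj, s, ⟨e⟩⟩ := hg
  obtain ⟨p, k, h, hk, ⟨e'⟩⟩ := hf.exists_square s
  exact ⟨p, k ≫ j, S.comp_mem hk hj, h,
    ⟨(α_ h f g).symm ≪≫ whiskerRightIso e' g ≪≫ α_ k s g ≪≫ whiskerLeftIso k e⟩⟩

theorem WeakEquiv.comp {x y z : B} {f : x ⟶ y} {g : y ⟶ z} (hf : WeakEquiv S f)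
    (hg : WeakEquiv S g) : WeakEquiv S (f ≫ g) :=
  ⟨hf.1.comp hg.1, hf.2.comp hg.2⟩

theorem WeakEquiv.of_iso {a b : B} {f g : a ⟶ b} (hf : WeakEquiv S f) (e : f ≅ g) :
    WeakEquiv S g :=
  ⟨hf.1.of_iso e, hf.2.of_iso e⟩

theorem bf1_weakEquiv : BF1 (fun _ _ f => WeakEquiv S f) :=
  fun _ _ _ hf => ⟨hf.isFF, .of_isIntEquiv hf⟩

theorem bf2_weakEquiv : BF2 (fun _ _ f => WeakEquiv S f) :=
  ⟨fun _ _ _ _ _ hf hg => hf.comp hg, fun _ _ _ _ hf ⟨e⟩ => hf.of_iso e⟩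

theorem bf3_weakEquiv : BF3 (fun _ _ f => WeakEquiv S f) := fun _ _ _ _ f hw =>
  let ⟨p, v, g, hv, e⟩ := hw.2.exists_square f
  ⟨p, v, g, S.weakEquiv_of_J hv, e⟩

end WeakEquiv

theorem whiskerRight_comp_whiskerLeft_whiskerLeft {a b c d e : B} {u : a ⟶ b} {v : b ⟶ d}
    {u' : a ⟶ c} {v' : c ⟶ d} {f g : d ⟶ e} (η : u ≫ v ⟶ u' ≫ v') (γ : f ⟶ g) :
    η ▷ f ≫ (α_ u' v' f).hom ≫ u' ◁ v' ◁ γ =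
      (α_ u v f).hom ≫ u ◁ v ◁ γ ≫ (α_ u v g).inv ≫ η ▷ g ≫ (α_ u' v' g).hom := by
  simp only [← associator_naturality_right, ← associator_naturality_right_assoc,
    whisker_exchange_assoc, Iso.hom_inv_id_assoc]

theorem bf4_of_isFF {W : ∀ ⦃a b : B⦄, (a ⟶ b) → Prop} (hff : ∀ ⦃a b : B⦄ (f : a ⟶ b), W f → IsFF f)
    (h1 : BF1 W) (h2 : BF2 W) (h3 : BF3 W) : BF4 W := by
  intro x y z f g w hw α
  obtain ⟨γ, rfl⟩ := (hff w hw).exists_whiskerRight_eq α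
  have factor_iff {x' : B} (v : x' ⟶ x) (β : v ≫ f ⟶ v ≫ g) :
      β ▷ w = (α_ v f w).hom ≫ v ◁ γ ▷ w ≫ (α_ v g w).inv ↔ β = v ◁ γ := by
    rw [← whisker_assoc]
    exact (hff w hw).whiskerRight_injective.eq_iff
  refine ⟨⟨x, 𝟙 x, 𝟙 x ◁ γ, h1 _ (isIntEquiv_id x), (factor_iff _ _).2 rfl, fun _ => ?_⟩, ?_⟩
  · have := (hff w hw).isIso_of_isIso_whiskerRight γ
    infer_instance
  · intro x' x'' v v' β β' hv hv' hβ hβ'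
    obtain rfl := (factor_iff v β).1 hβ
    obtain rfl := (factor_iff v' β').1 hβ'
    obtain ⟨t, u', u, hu', ⟨e⟩⟩ := h3 v v' hv
    exact ⟨t, u, u', h2.2 (h2.1 hu' hv') ⟨e.symm⟩, h2.1 hu' hv', e,
      whiskerRight_comp_whiskerLeft_whiskerLeft e.hom γ⟩

/-- a 2-site admits a bicategory of fractions for its weak
equivalences, i.e. W_J satisfies Pronk's conditions BF1–BF4. -/
theorem twoSite_admits_fractions (S : TwoSite B) :
    BF1 (fun _ _ f => WeakEquiv S f) ∧ BF2 (fun _ _ f => WeakEquiv S f) ∧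
    BF3 (fun _ _ f => WeakEquiv S f) ∧ BF4 (fun _ _ f => WeakEquiv S f) :=
  ⟨bf1_weakEquiv, bf2_weakEquiv, bf3_weakEquiv,
    bf4_of_isFF (fun _ _ _ hf => hf.1) bf1_weakEquiv bf2_weakEquiv bf3_weakEquiv⟩
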